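/- Let a, b ∈ ℝ^n_+ with a ≤ b and let Ξ_{a,b} = {ξ ∈ ℝ^n : a ≤ ξ ≤ b componentwise}. Let ξ̂_1,…,ξ̂_N ∈ Ξ_{a,b}, q ∈ [1,∞], ε > 0, l ∈ {1,…,N}, α ∈ ((l−1)/N, l/N], and let c ≥ 1 satisfy ‖b − ξ̂_i‖_q ≤ c ε N / l for all i. Define ξ'_i = ξ̂_i + (b − ξ̂_i)/c. Let X ⊆ {0,1}^n be nonempty and finite and suppose x' ∈ X minimizes x ↦ CVaR^α(ξ'_1ᵀx,…,ξ'_Nᵀx) over X. Then x' is a c-approximate solution to the Wasserstein distributionally robust problem: for every x ∈ X, the maximum over (ξ_1,…,ξ_N) ∈ (Ξ_{a,b})^N with Σ_{i=1}^N ‖ξ_i − ξ̂_i‖_q ≤ Nε of CVaR^α(ξ_1ᵀx',…,ξ_Nᵀx') is at most c times the maximum over the same set of CVaR^α(ξ_1ᵀx,…,ξ_Nᵀx). -/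
import Mathlib


open scoped BigOperators ENNReal

/-- Conditional Value at Risk of the values `c 1, …, c N` at risk level `α`:
`CVaR^α(c) = inf_{t ∈ ℝ} ( t + (1/(α N)) Σ_i max(c i − t, 0) )`. -/
noncomputable def cvar (N : ℕ) (α : ℝ) (c : Fin N → ℝ) : ℝ :=
  ⨅ t : ℝ, (t + 1 / (α * N) * ∑ i, max (c i - t) 0)

/-- The `q`-norm on `ℝ^n`, for an exponent `q ∈ [1,∞]` (represented as `ℝ≥0∞`). -/
noncomputable def qnorm {n : ℕ} (q : ℝ≥0∞) (v : Fin n → ℝ) : ℝ :=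
  if q = ⊤ then ⨆ i, |v i| else (∑ i, |v i| ^ q.toReal) ^ (1 / q.toReal)

lemma cvar_bddBelow {N : ℕ} {α : ℝ} (hα : 0 < α) (hα1 : α ≤ 1) (hN : 0 < N) (v : Fin N → ℝ) :
    BddBelow (Set.range fun t : ℝ => t + 1 / (α * ↑N) * ∑ i, max (v i - t) 0) := by
  have hN' : (0:ℝ) < N := by exact_mod_cast hN
  have hαN : 0 < α * N := by positivity
  have hk : 0 < 1 / (α * (N:ℝ)) := by positivity
  refine ⟨min 0 (1 / (α * ↑N) * ∑ i, v i), ?_⟩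
  rintro y ⟨t, rfl⟩
  rcases le_total 0 t with h | h
  · have h0 : (0:ℝ) ≤ 1 / (α * ↑N) * ∑ i, max (v i - t) 0 :=
      mul_nonneg hk.le (Finset.sum_nonneg fun i _ => le_max_right _ _)
    have : min (0:ℝ) (1 / (α * ↑N) * ∑ i, v i) ≤ 0 := min_le_left _ _
    dsimp only
    linarith
  · have h1 : ∑ i, (v i - t) ≤ ∑ i, max (v i - t) 0 :=
      Finset.sum_le_sum fun i _ => le_max_left _ _
    have h2 : ∑ i, (v i - t) = ∑ i, v i - N * t := by
      rw [Finset.sum_sub_distrib, Finset.sum_const, Finset.card_univ, Fintype.card_fin,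
        nsmul_eq_mul]
    have hkN : 1 ≤ 1/(α*(N:ℝ)) * N := by
      rw [div_mul_eq_mul_div, one_mul, le_div_iff₀ hαN]
      nlinarith
    have h3 : min (0:ℝ) (1 / (α * ↑N) * ∑ i, v i) ≤ 1 / (α * ↑N) * ∑ i, v i :=
      min_le_right _ _
    have h4 := mul_le_mul_of_nonneg_left h1 hk.le
    dsimp only
    nlinarith [mul_nonneg (neg_nonneg.mpr h) (sub_nonneg.mpr hkN)]

lemma cvar_le_mul {N : ℕ} {α : ℝ} (hα : 0 < α) (hα1 : α ≤ 1) (hN : 0 < N)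
    {c : ℝ} (hc : 0 < c) {v u : Fin N → ℝ} (h : ∀ i, v i ≤ c * u i) :
    cvar N α v ≤ c * cvar N α u := by
  rw [mul_comm, ← div_le_iff₀ hc]
  refine le_ciInf fun s => ?_
  rw [div_le_iff₀ hc]
  have hk : 0 ≤ 1 / (α * (N:ℝ)) := by positivity
  have step1 : cvar N α v ≤ c*s + 1/(α*(N:ℝ)) * ∑ i, max (v i - c*s) 0 :=
    ciInf_le (cvar_bddBelow hα hα1 hN v) (c*s)
  have step2 : ∀ i, max (v i - c*s) 0 ≤ c * max (u i - s) 0 := by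
    intro i
    rw [mul_max_of_nonneg _ _ hc.le, mul_zero, mul_sub]
    exact max_le_max (by linarith [h i]) le_rfl
  have step3 : ∑ i, max (v i - c*s) 0 ≤ c * ∑ i, max (u i - s) 0 := by
    rw [Finset.mul_sum]
    exact Finset.sum_le_sum fun i _ => step2 i
  calc cvar N α v ≤ c*s + 1/(α*(N:ℝ)) * ∑ i, max (v i - c*s) 0 := step1
    _ ≤ c*s + 1/(α*(N:ℝ)) * (c * ∑ i, max (u i - s) 0) := by
        have := mul_le_mul_of_nonneg_left step3 hk
        linarith
    _ = (s + 1 / (α * ↑N) * ∑ i, max (u i - s) 0) * c := by ring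

lemma exists_top_finset {N : ℕ} (v : Fin N → ℝ) :
    ∀ l : ℕ, l ≤ N → ∃ S : Finset (Fin N), S.card = l ∧ ∀ i ∉ S, ∀ j ∈ S, v i ≤ v j := by
  intro l
  induction l with
  | zero => exact fun _ => ⟨∅, rfl, by simp⟩
  | succ m ih =>
    intro hl
    obtain ⟨S, hcard, hS⟩ := ih (Nat.le_of_succ_le hl)
    have hcompl : Sᶜ.Nonempty := by
      rw [← Finset.card_pos, Finset.card_compl, hcard, Fintype.card_fin]
      omega
    obtain ⟨i0, hi0, hmax⟩ := Finset.exists_max_image Sᶜ v hcompl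
    have hi0S : i0 ∉ S := Finset.mem_compl.mp hi0
    refine ⟨insert i0 S, ?_, ?_⟩
    · rw [Finset.card_insert_of_notMem hi0S, hcard]
    · intro i hi j hj
      have hiS : i ∉ S := fun h => hi (Finset.mem_insert_of_mem h)
      rcases Finset.mem_insert.mp hj with rfl | hjS
      · exact hmax i (Finset.mem_compl.mpr hiS)
      · exact hS i hiS j hjS

lemma le_cvar_of_top {N l : ℕ} {α : ℝ} (hα : 0 < α) (hα1 : α ≤ 1) (hN : 0 < N)
    (hl1 : 1 ≤ l) (hαNl : α * N ≤ l) (hlαN : (l:ℝ) - 1 ≤ α * N)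
    {S : Finset (Fin N)} (hScard : S.card = l)
    {v w : Fin N → ℝ} (hw : ∀ i ∈ S, w i = v i)
    (htop : ∀ i ∉ S, ∀ j ∈ S, v i ≤ v j) :
    cvar N α v ≤ cvar N α w := by
  have hN' : (0:ℝ) < N := by exact_mod_cast hN
  have hαN : 0 < α * N := by positivity
  have hk : 0 < 1 / (α * (N:ℝ)) := by positivity
  have hkl : (1:ℝ) ≤ 1/(α*(N:ℝ)) * l := by
    rw [one_div, inv_mul_eq_div, le_div_iff₀ hαN]; linarith
  have hk1 : 1/(α*(N:ℝ)) * ((l:ℝ)-1) ≤ 1 := by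
    rw [one_div, inv_mul_eq_div, div_le_one hαN]; linarith
  have hSne : S.Nonempty := Finset.card_pos.mp (by rw [hScard]; omega)
  obtain ⟨i0, hi0S, hi0min⟩ := Finset.exists_min_image S v hSne
  refine le_ciInf fun t => ?_
  have step1 : cvar N α v ≤ v i0 + 1/(α*(N:ℝ)) * ∑ i, max (v i - v i0) 0 :=
    ciInf_le (cvar_bddBelow hα hα1 hN v) (v i0)
  have hA : ∑ i, max (v i - v i0) 0 = ∑ i ∈ S, (v i - v i0) := by
    rw [← Finset.sum_add_sum_compl S (fun i => max (v i - v i0) 0)]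
    have h1 : ∑ i ∈ S, max (v i - v i0) 0 = ∑ i ∈ S, (v i - v i0) :=
      Finset.sum_congr rfl fun i hi => max_eq_left (sub_nonneg.mpr (hi0min i hi))
    have h2 : ∑ i ∈ Sᶜ, max (v i - v i0) 0 = 0 :=
      Finset.sum_eq_zero fun i hi =>
        max_eq_right (sub_nonpos.mpr (htop i (Finset.mem_compl.mp hi) i0 hi0S))
    rw [h1, h2, add_zero]
  have hB : ∑ i ∈ S, max (v i - t) 0 ≤ ∑ i, max (w i - t) 0 := by
    rw [← Finset.sum_add_sum_compl S (fun i => max (w i - t) 0)]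
    have h1 : ∑ i ∈ S, max (v i - t) 0 = ∑ i ∈ S, max (w i - t) 0 :=
      Finset.sum_congr rfl fun i hi => by rw [hw i hi]
    have h2 : 0 ≤ ∑ i ∈ Sᶜ, max (w i - t) 0 :=
      Finset.sum_nonneg fun i _ => le_max_right _ _
    linarith
  have core : v i0 + 1/(α*(N:ℝ)) * ∑ i ∈ S, (v i - v i0) ≤
      t + 1/(α*(N:ℝ)) * ∑ i ∈ S, max (v i - t) 0 := by
    rcases le_total t (v i0) with h | h
    · have hmax : ∑ i ∈ S, max (v i - t) 0 = ∑ i ∈ S, (v i - t) :=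
        Finset.sum_congr rfl fun i hi =>
          max_eq_left (sub_nonneg.mpr (le_trans h (hi0min i hi)))
      have hs1 : ∑ i ∈ S, (v i - v i0) = ∑ i ∈ S, v i - (l:ℝ) * v i0 := by
        rw [Finset.sum_sub_distrib, Finset.sum_const, hScard, nsmul_eq_mul]
      have hs2 : ∑ i ∈ S, (v i - t) = ∑ i ∈ S, v i - (l:ℝ) * t := by
        rw [Finset.sum_sub_distrib, Finset.sum_const, hScard, nsmul_eq_mul]
      rw [hmax, hs1, hs2]
      nlinarith [mul_le_mul_of_nonneg_right hkl (sub_nonneg.mpr h)]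
    · have he0 : max (v i0 - t) 0 = 0 := max_eq_right (by linarith)
      have he1 : ∑ i ∈ S, max (v i - t) 0 = ∑ i ∈ S.erase i0, max (v i - t) 0 := by
        rw [← Finset.sum_erase_add S _ hi0S, he0, add_zero]
      have he2 : ∑ i ∈ S, (v i - v i0) = ∑ i ∈ S.erase i0, (v i - v i0) := by
        rw [← Finset.sum_erase_add S _ hi0S, sub_self, add_zero]
      have he3 : ∑ i ∈ S.erase i0, (v i - t) ≤ ∑ i ∈ S.erase i0, max (v i - t) 0 :=
        Finset.sum_le_sum fun i _ => le_max_left _ _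
      have hecard : ((S.erase i0).card : ℝ) = (l:ℝ) - 1 := by
        rw [Finset.card_erase_of_mem hi0S, hScard, Nat.cast_sub hl1, Nat.cast_one]
      have hs1 : ∑ i ∈ S.erase i0, (v i - v i0) =
          ∑ i ∈ S.erase i0, v i - ((l:ℝ)-1) * v i0 := by
        rw [Finset.sum_sub_distrib, Finset.sum_const, nsmul_eq_mul, hecard]
      have hs2 : ∑ i ∈ S.erase i0, (v i - t) =
          ∑ i ∈ S.erase i0, v i - ((l:ℝ)-1) * t := by
        rw [Finset.sum_sub_distrib, Finset.sum_const, nsmul_eq_mul, hecard]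
      rw [he1, he2, hs1]
      have hfin : ∑ i ∈ S.erase i0, v i - ((l:ℝ)-1) * t ≤
          ∑ i ∈ S.erase i0, max (v i - t) 0 := by
        rw [← hs2]; exact he3
      nlinarith [mul_le_mul_of_nonneg_right hk1 (sub_nonneg.mpr h),
        mul_le_mul_of_nonneg_left hfin hk.le]
  calc cvar N α v ≤ v i0 + 1/(α*(N:ℝ)) * ∑ i ∈ S, (v i - v i0) := by rw [← hA]; exact step1
    _ ≤ t + 1/(α*(N:ℝ)) * ∑ i ∈ S, max (v i - t) 0 := core
    _ ≤ t + 1/(α*(N:ℝ)) * ∑ i, max (w i - t) 0 := by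
        have := mul_le_mul_of_nonneg_left hB hk.le; linarith

lemma qnorm_zero {n : ℕ} {q : ℝ≥0∞} (hq : 1 ≤ q) :
    qnorm q (fun _ : Fin n => (0:ℝ)) = 0 := by
  unfold qnorm
  split_ifs with h
  · simp [Real.iSup_const_zero]
  · have hp : 1 ≤ q.toReal := by
      rw [← ENNReal.toReal_one]; exact ENNReal.toReal_mono h hq
    have hp0 : q.toReal ≠ 0 := by linarith
    simp only [abs_zero, Real.zero_rpow hp0, Finset.sum_const_zero]
    rw [Real.zero_rpow (one_div_ne_zero hp0)]

lemma qnorm_div_le {n : ℕ} {q : ℝ≥0∞} (hq : 1 ≤ q) (v : Fin n → ℝ) {c B : ℝ}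
    (hc : 0 < c) (hB : 0 ≤ B) (h : qnorm q v ≤ c * B) :
    qnorm q (fun j => v j / c) ≤ B := by
  unfold qnorm at h ⊢
  split_ifs with ht
  · rw [ht, if_pos rfl] at h
    refine Real.iSup_le (fun j => ?_) hB
    have h1 : |v j| ≤ ⨆ i, |v i| :=
      le_ciSup (f := fun i => |v i|) (Set.Finite.bddAbove (Set.finite_range _)) j
    rw [abs_div, abs_of_pos hc, div_le_iff₀ hc]
    calc |v j| ≤ c * B := le_trans h1 h
      _ = B * c := mul_comm _ _
  · rw [if_neg ht] at h
    have hp : 1 ≤ q.toReal := by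
      rw [← ENNReal.toReal_one]; exact ENNReal.toReal_mono ht hq
    have hp0 : 0 < q.toReal := by linarith
    have hce : (c ^ q.toReal) ^ (1 / q.toReal) = c := by
      rw [← Real.rpow_mul hc.le, mul_one_div, div_self (ne_of_gt hp0), Real.rpow_one]
    have key : (∑ i, |v i / c| ^ q.toReal) ^ (1 / q.toReal) =
        ((∑ i, |v i| ^ q.toReal) ^ (1 / q.toReal)) / c := by
      have h1 : ∀ i : Fin n, |v i / c| ^ q.toReal = |v i| ^ q.toReal / c ^ q.toReal := by
        intro i
        rw [abs_div, abs_of_pos hc, Real.div_rpow (abs_nonneg _) hc.le]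
      simp_rw [h1]
      rw [← Finset.sum_div,
        Real.div_rpow (Finset.sum_nonneg fun i _ => Real.rpow_nonneg (abs_nonneg _) _)
          (Real.rpow_nonneg hc.le _), hce]
    rw [key, div_le_iff₀ hc]
    calc (∑ i, |v i| ^ q.toReal) ^ (1 / q.toReal) ≤ c * B := h
      _ = B * c := mul_comm _ _

/-- Approximation guarantee for the box support set `Ξ_{a,b} = {ξ : a ≤ ξ ≤ b}` with
`0 ≤ a ≤ b`.  With `c ≥ 1` satisfying `‖b − ξ̂_i‖_q ≤ cεN/l` and distorted sample
`ξ'_i = ξ̂_i + (b − ξ̂_i)/c`: if `x' ∈ X` minimizes the CVaR of the distorted sample over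
`X`, then for every `x ∈ X` the worst-case CVaR of `x'` over the ambiguity set is at most
`c` times the worst-case CVaR of `x`. -/
theorem stmt_11 (n N : ℕ) (hN : 0 < N)
    (a b : Fin n → ℝ) (ha : ∀ j, 0 ≤ a j) (hab : ∀ j, a j ≤ b j)
    (ξh : Fin N → Fin n → ℝ) (hξh : ∀ i j, a j ≤ ξh i j ∧ ξh i j ≤ b j)
    (q : ℝ≥0∞) (hq : 1 ≤ q) (ε : ℝ) (hε : 0 < ε)
    (l : ℕ) (hl1 : 1 ≤ l) (hlN : l ≤ N)
    (α : ℝ) (hαl : ((l : ℝ) - 1) / N < α) (hαu : α ≤ (l : ℝ) / N)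
    (c : ℝ) (hc : 1 ≤ c)
    (hcbound : ∀ i, qnorm q (fun j => b j - ξh i j) ≤ c * ε * N / l)
    (X : Finset (Fin n → ℝ)) (hXne : X.Nonempty)
    (hXbin : ∀ x ∈ X, ∀ j, x j = 0 ∨ x j = 1)
    (x' : Fin n → ℝ) (hx' : x' ∈ X)
    (hopt : ∀ x ∈ X,
      cvar N α (fun i => ∑ j, (ξh i j + (b j - ξh i j) / c) * x' j) ≤
        cvar N α (fun i => ∑ j, (ξh i j + (b j - ξh i j) / c) * x j)) :
    ∀ x ∈ X,
      sSup {y : ℝ | ∃ ξ : Fin N → Fin n → ℝ, (∀ i j, a j ≤ ξ i j ∧ ξ i j ≤ b j) ∧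
          (∑ i, qnorm q (fun j => ξ i j - ξh i j)) ≤ N * ε ∧
          y = cvar N α (fun i => ∑ j, ξ i j * x' j)} ≤
        c * sSup {y : ℝ | ∃ ξ : Fin N → Fin n → ℝ, (∀ i j, a j ≤ ξ i j ∧ ξ i j ≤ b j) ∧
          (∑ i, qnorm q (fun j => ξ i j - ξh i j)) ≤ N * ε ∧
          y = cvar N α (fun i => ∑ j, ξ i j * x j)} := by
  intro x hx
  have hN' : (0:ℝ) < N := by exact_mod_cast hN
  have hl' : (1:ℝ) ≤ l := by exact_mod_cast hl1
  have hl0 : (0:ℝ) < l := by linarith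
  have hα0 : 0 < α := lt_of_le_of_lt (div_nonneg (by linarith) hN'.le) hαl
  have hα1 : α ≤ 1 := le_trans hαu (by rw [div_le_one hN']; exact_mod_cast hlN)
  have hαNl : α * N ≤ l := (le_div_iff₀ hN').mp hαu
  have hlαN : (l:ℝ) - 1 ≤ α * N := ((div_lt_iff₀ hN').mp hαl).le
  have hc0 : (0:ℝ) < c := lt_of_lt_of_le one_pos hc
  have hb0 : ∀ j, 0 ≤ b j := fun j => le_trans (ha j) (hab j)
  have hx01 : ∀ z ∈ X, ∀ j, 0 ≤ z j ∧ z j ≤ 1 := by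
    intro z hz j
    rcases hXbin z hz j with h | h <;> rw [h] <;> norm_num
  -- upper bound for all members of the ambiguity-set value sets
  have hmemle : ∀ z : Fin n → ℝ, (∀ j, 0 ≤ z j ∧ z j ≤ 1) → ∀ ξ : Fin N → Fin n → ℝ,
      (∀ i j, a j ≤ ξ i j ∧ ξ i j ≤ b j) →
      cvar N α (fun i => ∑ j, ξ i j * z j) ≤ ∑ j, b j := by
    intro z hz ξ hξ
    have step : cvar N α (fun i => ∑ j, ξ i j * z j) ≤
        (∑ j, b j) + 1/(α*(N:ℝ)) * ∑ i, max ((∑ j, ξ i j * z j) - (∑ j, b j)) 0 :=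
      ciInf_le (cvar_bddBelow hα0 hα1 hN _) (∑ j, b j)
    have hzero : ∑ i, max ((∑ j, ξ i j * z j) - (∑ j, b j)) 0 = 0 := by
      refine Finset.sum_eq_zero fun i _ => max_eq_right (sub_nonpos.mpr ?_)
      refine Finset.sum_le_sum fun j _ => ?_
      calc ξ i j * z j ≤ b j * z j :=
            mul_le_mul_of_nonneg_right (hξ i j).2 (hz j).1
        _ ≤ b j * 1 := mul_le_mul_of_nonneg_left (hz j).2 (hb0 j)
        _ = b j := mul_one _
    rw [hzero, mul_zero, add_zero] at step
    exact step
  have hbdd : ∀ z : Fin n → ℝ, (∀ j, 0 ≤ z j ∧ z j ≤ 1) →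
      BddAbove {y : ℝ | ∃ ξ : Fin N → Fin n → ℝ, (∀ i j, a j ≤ ξ i j ∧ ξ i j ≤ b j) ∧
        (∑ i, qnorm q (fun j => ξ i j - ξh i j)) ≤ N * ε ∧
        y = cvar N α (fun i => ∑ j, ξ i j * z j)} := by
    intro z hz
    refine ⟨∑ j, b j, ?_⟩
    rintro y ⟨ξ, hξ, _, rfl⟩
    exact hmemle z hz ξ hξ
  have hbudget0 : (∑ i : Fin N, qnorm q (fun j => ξh i j - ξh i j)) ≤ N * ε := by
    have : ∀ i : Fin N, qnorm q (fun j => ξh i j - ξh i j) = 0 := by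
      intro i
      rw [show (fun j => ξh i j - ξh i j) = fun _ : Fin n => (0:ℝ) from
        funext fun j => sub_self _]
      exact qnorm_zero hq
    rw [Finset.sum_congr rfl fun i _ => this i, Finset.sum_const_zero]
    positivity
  have hne : ∀ z : Fin n → ℝ, {y : ℝ | ∃ ξ : Fin N → Fin n → ℝ,
      (∀ i j, a j ≤ ξ i j ∧ ξ i j ≤ b j) ∧
      (∑ i, qnorm q (fun j => ξ i j - ξh i j)) ≤ N * ε ∧
      y = cvar N α (fun i => ∑ j, ξ i j * z j)}.Nonempty :=
    fun z => ⟨cvar N α (fun i => ∑ j, ξh i j * z j), ξh, hξh, hbudget0, rfl⟩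
  -- Step A : sSup of x' set ≤ c * cvar of distorted sample for x'
  have stepA : sSup {y : ℝ | ∃ ξ : Fin N → Fin n → ℝ,
      (∀ i j, a j ≤ ξ i j ∧ ξ i j ≤ b j) ∧
      (∑ i, qnorm q (fun j => ξ i j - ξh i j)) ≤ N * ε ∧
      y = cvar N α (fun i => ∑ j, ξ i j * x' j)} ≤
      c * cvar N α (fun i => ∑ j, (ξh i j + (b j - ξh i j) / c) * x' j) := by
    refine csSup_le (hne x') ?_
    rintro y ⟨ξ, hξ, _, rfl⟩
    refine cvar_le_mul hα0 hα1 hN hc0 fun i => ?_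
    rw [Finset.mul_sum]
    refine Finset.sum_le_sum fun j _ => ?_
    have hxj := hx01 x' hx' j
    have key : ξ i j ≤ c * (ξh i j + (b j - ξh i j) / c) := by
      have hcc : c * ((b j - ξh i j) / c) = b j - ξh i j :=
        mul_div_cancel₀ _ (ne_of_gt hc0)
      nlinarith [(hξ i j).2, (hξh i j).1, ha j]
    calc ξ i j * x' j ≤ (c * (ξh i j + (b j - ξh i j) / c)) * x' j :=
          mul_le_mul_of_nonneg_right key hxj.1
      _ = c * ((ξh i j + (b j - ξh i j) / c) * x' j) := by ring
  -- Step C : cvar of distorted sample for x ≤ sSup of x set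
  have stepC : cvar N α (fun i => ∑ j, (ξh i j + (b j - ξh i j) / c) * x j) ≤
      sSup {y : ℝ | ∃ ξ : Fin N → Fin n → ℝ,
        (∀ i j, a j ≤ ξ i j ∧ ξ i j ≤ b j) ∧
        (∑ i, qnorm q (fun j => ξ i j - ξh i j)) ≤ N * ε ∧
        y = cvar N α (fun i => ∑ j, ξ i j * x j)} := by
    obtain ⟨S, hScard, htop⟩ :=
      exists_top_finset (fun i => ∑ j, (ξh i j + (b j - ξh i j) / c) * x j) l hlN
    set ξw : Fin N → Fin n → ℝ :=
      fun i j => if i ∈ S then ξh i j + (b j - ξh i j) / c else ξh i j with hξw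
    have hsupport : ∀ i j, a j ≤ ξw i j ∧ ξw i j ≤ b j := by
      intro i j
      by_cases hi : i ∈ S
      · simp only [hξw, if_pos hi]
        constructor
        · have : 0 ≤ (b j - ξh i j) / c :=
            div_nonneg (by linarith [(hξh i j).2]) hc0.le
          linarith [(hξh i j).1]
        · have : (b j - ξh i j) / c ≤ b j - ξh i j :=
            div_le_self (by linarith [(hξh i j).2]) hc
          linarith
      · simp only [hξw, if_neg hi]
        exact hξh i j
    have hbudget : (∑ i, qnorm q (fun j => ξw i j - ξh i j)) ≤ N * ε := by
      have hterm : ∀ i : Fin N, qnorm q (fun j => ξw i j - ξh i j) ≤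
          if i ∈ S then ε * N / l else 0 := by
        intro i
        by_cases hi : i ∈ S
        · rw [if_pos hi]
          rw [show (fun j => ξw i j - ξh i j) = fun j => (b j - ξh i j) / c from
            funext fun j => by simp only [hξw, if_pos hi]; ring]
          refine qnorm_div_le hq _ hc0 (by positivity) ?_
          calc qnorm q (fun j => b j - ξh i j) ≤ c * ε * N / l := hcbound i
            _ = c * (ε * N / l) := by ring
        · rw [if_neg hi]
          rw [show (fun j => ξw i j - ξh i j) = fun _ : Fin n => (0:ℝ) from
            funext fun j => by simp only [hξw, if_neg hi]; ring]
          rw [qnorm_zero hq]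
      calc (∑ i, qnorm q (fun j => ξw i j - ξh i j)) ≤
            ∑ i, (if i ∈ S then ε * N / l else 0) :=
          Finset.sum_le_sum fun i _ => hterm i
        _ = ∑ i ∈ S, (ε * N / l) := by
            rw [Finset.sum_ite_mem, Finset.univ_inter]
        _ = (l:ℝ) * (ε * N / l) := by
            rw [Finset.sum_const, hScard, nsmul_eq_mul]
        _ = N * ε := by field_simp
      -- end
    have hmemw : cvar N α (fun i => ∑ j, ξw i j * x j) ∈
        {y : ℝ | ∃ ξ : Fin N → Fin n → ℝ,
          (∀ i j, a j ≤ ξ i j ∧ ξ i j ≤ b j) ∧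
          (∑ i, qnorm q (fun j => ξ i j - ξh i j)) ≤ N * ε ∧
          y = cvar N α (fun i => ∑ j, ξ i j * x j)} :=
      ⟨ξw, hsupport, hbudget, rfl⟩
    have hw : ∀ i ∈ S, (∑ j, ξw i j * x j) =
        (fun i => ∑ j, (ξh i j + (b j - ξh i j) / c) * x j) i := by
      intro i hi
      exact Finset.sum_congr rfl fun j _ => by simp only [hξw, if_pos hi]
    have hle : cvar N α (fun i => ∑ j, (ξh i j + (b j - ξh i j) / c) * x j) ≤
        cvar N α (fun i => ∑ j, ξw i j * x j) :=
      le_cvar_of_top hα0 hα1 hN hl1 hαNl hlαN hScard hw htop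
    exact le_trans hle (le_csSup (hbdd x (hx01 x hx)) hmemw)
  calc sSup {y : ℝ | ∃ ξ : Fin N → Fin n → ℝ,
        (∀ i j, a j ≤ ξ i j ∧ ξ i j ≤ b j) ∧
        (∑ i, qnorm q (fun j => ξ i j - ξh i j)) ≤ N * ε ∧
        y = cvar N α (fun i => ∑ j, ξ i j * x' j)} ≤
      c * cvar N α (fun i => ∑ j, (ξh i j + (b j - ξh i j) / c) * x' j) := stepA
    _ ≤ c * cvar N α (fun i => ∑ j, (ξh i j + (b j - ξh i j) / c) * x j) :=
        mul_le_mul_of_nonneg_left (hopt x hx) hc0.le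
    _ ≤ c * sSup {y : ℝ | ∃ ξ : Fin N → Fin n → ℝ,
        (∀ i j, a j ≤ ξ i j ∧ ξ i j ≤ b j) ∧
        (∑ i, qnorm q (fun j => ξ i j - ξh i j)) ≤ N * ε ∧
        y = cvar N α (fun i => ∑ j, ξ i j * x j)} :=
        mul_le_mul_of_nonneg_left stepC hc0.le
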